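/- Let p, q, r, s > 0 with qr/((1+p)(1+s)) < 1 and let 0 < c < d < 1. Then there exist constants 0 < c₁ < 1 < c₂ and 0 < m₁ < 1 < m₂ such that d ≥ c₁ m₂^{q/(1+p)}, c ≤ c₂ m₁^{q/(1+p)}, c c₂^{r/(1+s)} ≤ m₂, and d c₁^{r/(1+s)} ≥ m₁. -/

import Mathlib

open Real

/-- The theorem in logarithmic coordinates `ξ = log c₁`, `τ = log c₂`, `η = log m₁`,
`μ = log m₂`, `a = log c`, `b = log d`, `α = q / (1 + p)`, `β = r / (1 + s)`. -/
theorem exists_log_solution_of_mul_lt_one {α β a b : ℝ} (hα : 0 ≤ α) (hβ : 0 ≤ β)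
    (hαβ : α * β < 1) (ha : a < 0) (hb : b < 0) :
    ∃ ξ τ η μ : ℝ, ξ < 0 ∧ 0 < τ ∧ η < 0 ∧ 0 < μ ∧
      ξ + μ * α ≤ b ∧ a ≤ τ + η * α ∧ a + τ * β ≤ μ ∧ η ≤ b + ξ * β := by
  -- With `μ`, `ξ`, `η` chosen to make the third, first and fourth inequalities equalities,
  -- the second one becomes `R ≤ τ (1 - (αβ)²)`, which holds for large `τ` since `αβ < 1`.
  have hθ : 0 < 1 - (α * β) ^ 2 := by nlinarith [mul_nonneg hα hβ]
  set R := a - α * (b * (1 + β) + α * β * a)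
  set τ := max (R / (1 - (α * β) ^ 2)) 1
  have hτ : 0 < τ := lt_of_lt_of_le one_pos (le_max_right _ _)
  have hRτ : R ≤ τ * (1 - (α * β) ^ 2) := (div_le_iff₀ hθ).1 (le_max_left _ _)
  have hμ : 0 < τ * β - a := by nlinarith
  have hξ : b - (τ * β - a) * α < 0 := by nlinarith
  refine ⟨b - (τ * β - a) * α, τ, b + (b - (τ * β - a) * α) * β, τ * β - a,
    hξ, hτ, by nlinarith, hμ, by linarith, by nlinarith, by linarith, le_rfl⟩

theorem exp_mul_exp_rpow (x y z : ℝ) : exp x * exp y ^ z = exp (x + y * z) := by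
  rw [← exp_mul, ← exp_add]

theorem stmt8 (p q r s c d : ℝ) (hp : 0 < p) (hq : 0 < q) (hr : 0 < r) (hs : 0 < s)
    (hθ : q * r / ((1 + p) * (1 + s)) < 1)
    (hc : 0 < c) (hcd : c < d) (hd : d < 1) :
    ∃ c₁ c₂ m₁ m₂ : ℝ, 0 < c₁ ∧ c₁ < 1 ∧ 1 < c₂ ∧ 0 < m₁ ∧ m₁ < 1 ∧ 1 < m₂ ∧
      c₁ * m₂ ^ (q / (1 + p)) ≤ d ∧ c ≤ c₂ * m₁ ^ (q / (1 + p)) ∧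
      c * c₂ ^ (r / (1 + s)) ≤ m₂ ∧ m₁ ≤ d * c₁ ^ (r / (1 + s)) := by
  have hα : 0 ≤ q / (1 + p) := by positivity
  have hβ : 0 ≤ r / (1 + s) := by positivity
  have hαβ : q / (1 + p) * (r / (1 + s)) < 1 := by rwa [div_mul_div_comm]
  have hd₀ : 0 < d := hc.trans hcd
  obtain ⟨ξ, τ, η, μ, hξ, hτ, hη, hμ, h₁, h₂, h₃, h₄⟩ :=
    exists_log_solution_of_mul_lt_one hα hβ hαβ (log_neg hc (hcd.trans hd))
      (log_neg hd₀ hd)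
  refine ⟨exp ξ, exp τ, exp η, exp μ, exp_pos ξ, exp_lt_one_iff.2 hξ, one_lt_exp_iff.2 hτ,
    exp_pos η, exp_lt_one_iff.2 hη, one_lt_exp_iff.2 hμ, ?_, ?_, ?_, ?_⟩
  · rw [← exp_log hd₀, exp_mul_exp_rpow]; exact exp_le_exp.2 h₁
  · rw [← exp_log hc, exp_mul_exp_rpow]; exact exp_le_exp.2 h₂
  · rw [← exp_log hc, exp_mul_exp_rpow]; exact exp_le_exp.2 h₃
  · rw [← exp_log hd₀, exp_mul_exp_rpow]; exact exp_le_exp.2 h₄
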